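/- Fix a sequence {P_n} of matrix orthogonal polynomials with respect to W. Two operators D₁, D₂ ∈ 𝒟(W) commute (D₁D₂ = D₂D₁ as differential operators) if and only if the matrices Λ_n(D₁) and Λ_n(D₂) commute for every n ≥ 0. -/

import Mathlib

open Polynomial Matrix MeasureTheory
open scoped ComplexOrder

noncomputable section

/-- `L×L` matrix-valued polynomials. -/
abbrev MP (L : ℕ) := Matrix (Fin L) (Fin L) (Polynomial ℂ)

/-- Entrywise derivative of a matrix polynomial. -/
def pder {L : ℕ} (P : MP L) : MP L := Matrix.of fun i j => Polynomial.derivative (P i j)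

/-- Evaluation of a matrix polynomial at a real point. -/
def evalM {L : ℕ} (P : MP L) (t : ℝ) : Matrix (Fin L) (Fin L) ℂ :=
  Matrix.of fun i j => (P i j).eval (t : ℂ)

/-- `P*`: the matrix polynomial whose value at a real `t` is the conjugate transpose of
`P(t)`. -/
def starMP {L : ℕ} (P : MP L) : MP L :=
  Matrix.of fun i j => (P j i).map (starRingEnd ℂ)

/-- An `L×L` matrix weight on the interval `(a,b)`: smooth, with positive definite
(Hermitian) values and finite moments. -/
structure MatrixWeight (L : ℕ) (a b : ℝ) where
  W : ℝ → Matrix (Fin L) (Fin L) ℂ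
  smooth : ∀ i j, ContDiffOn ℝ (⊤ : ℕ∞) (fun t => W t i j) (Set.Ioo a b)
  posdef : ∀ t ∈ Set.Ioo a b, (W t).PosDef
  moments : ∀ (n : ℕ) (i j : Fin L),
    IntervalIntegrable (fun t => |t| ^ n * ‖W t i j‖) MeasureTheory.volume a b

/-- The matrix-valued pairing `(P,Q) = ∫ₐᵇ P(t) W(t) Q(t)* dt`. -/
def mop {L : ℕ} {a b : ℝ} (Wt : MatrixWeight L a b) (P Q : MP L) :
    Matrix (Fin L) (Fin L) ℂ :=
  Matrix.of fun i j => ∫ t in a..b, (evalM P t * Wt.W t * (evalM Q t)ᴴ) i j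

/-- A sequence of matrix orthogonal polynomials with respect to the weight `W`:
`deg Pₙ = n`, nonsingular leading coefficient, and `(Pₙ,Pₘ) = 0` for `n ≠ m`. -/
def IsMOPS {L : ℕ} {a b : ℝ} (Wt : MatrixWeight L a b) (P : ℕ → MP L) : Prop :=
  (∀ (n : ℕ) (i j : Fin L), ((P n) i j).degree ≤ (n : WithBot ℕ))
    ∧ (∀ n : ℕ, ((P n).map fun q => q.coeff n).det ≠ 0)
    ∧ (∀ n m : ℕ, n ≠ m → mop Wt (P n) (P m) = 0)

/-- Membership in the class `𝒟` of differential operators `D = Σ_{i=0}^s F_i(t) dⁱ/dtⁱ`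
with matrix polynomial coefficients `F_i` of degree at most `i`. -/
def InD {L : ℕ} (D : MP L → MP L) : Prop :=
  ∃ (s : ℕ) (F : ℕ → MP L),
    (∀ i : ℕ, i ≤ s → ∀ r c : Fin L, ((F i) r c).degree ≤ (i : WithBot ℕ))
      ∧ ∀ P : MP L, D P = ∑ i ∈ Finset.range (s+1), F i * pder^[i] P

/-- Membership in the algebra `𝒟(W)`: operators in `𝒟` having all the `Pₙ*` as
eigenfunctions, `D(Pₙ*) = Pₙ*·Λₙ(D)`. -/
def DWmem {L : ℕ} {a b : ℝ} (Wt : MatrixWeight L a b) (P : ℕ → MP L)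
    (D : MP L → MP L) : Prop :=
  InD D ∧ ∀ n : ℕ, ∃ Λ : Matrix (Fin L) (Fin L) ℂ,
    D (starMP (P n)) = starMP (P n) * Λ.map Polynomial.C

section Aux
variable {L : ℕ}

lemma pder_add (Q R : MP L) : pder (Q + R) = pder Q + pder R := by
  ext i j
  simp [pder]

lemma pder_zero : pder (0 : MP L) = 0 := by
  ext i j; simp [pder]

lemma pder_mulC (Q : MP L) (M : Matrix (Fin L) (Fin L) ℂ) :
    pder (Q * M.map Polynomial.C) = pder Q * M.map Polynomial.C := by
  ext i j
  simp only [pder, Matrix.mul_apply, Matrix.map_apply, Matrix.of_apply]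
  simp [derivative_sum, derivative_mul]

lemma pder_iter_mulC (i : ℕ) (Q : MP L) (M : Matrix (Fin L) (Fin L) ℂ) :
    pder^[i] (Q * M.map Polynomial.C) = pder^[i] Q * M.map Polynomial.C := by
  induction i generalizing Q with
  | zero => simp
  | succ n ih => rw [Function.iterate_succ_apply, pder_mulC, ih, Function.iterate_succ_apply]

lemma pder_iter_add (i : ℕ) (Q R : MP L) :
    pder^[i] (Q + R) = pder^[i] Q + pder^[i] R := by
  induction i generalizing Q R with
  | zero => simp
  | succ n ih => rw [Function.iterate_succ_apply, pder_add, ih, Function.iterate_succ_apply, Function.iterate_succ_apply]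

lemma pder_iter_zero (i : ℕ) : pder^[i] (0 : MP L) = 0 := by
  induction i with
  | zero => simp
  | succ n ih => rw [Function.iterate_succ_apply, pder_zero, ih]

lemma InD.map_mulC {D : MP L → MP L} (hD : InD D) (Q : MP L) (M : Matrix (Fin L) (Fin L) ℂ) :
    D (Q * M.map Polynomial.C) = D Q * M.map Polynomial.C := by
  obtain ⟨s, F, -, hF⟩ := hD
  rw [hF, hF, Finset.sum_mul]
  refine Finset.sum_congr rfl fun i _ => ?_
  rw [pder_iter_mulC, Matrix.mul_assoc]

lemma InD.map_add {D : MP L → MP L} (hD : InD D) (Q R : MP L) :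
    D (Q + R) = D Q + D R := by
  obtain ⟨s, F, -, hF⟩ := hD
  rw [hF, hF, hF, ← Finset.sum_add_distrib]
  refine Finset.sum_congr rfl fun i _ => ?_
  rw [pder_iter_add, mul_add]

lemma InD.map_zero {D : MP L → MP L} (hD : InD D) : D 0 = 0 := by
  obtain ⟨s, F, -, hF⟩ := hD
  rw [hF]
  refine Finset.sum_eq_zero fun i _ => ?_
  rw [pder_iter_zero, mul_zero]

lemma InD.map_sum {D : MP L → MP L} (hD : InD D) {ι : Type*} (s : Finset ι) (f : ι → MP L) :
    D (∑ n ∈ s, f n) = ∑ n ∈ s, D (f n) := by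
  classical
  induction s using Finset.induction_on with
  | empty => simpa using hD.map_zero
  | insert _ _ h ih =>
      rw [Finset.sum_insert h, Finset.sum_insert h, hD.map_add, ih]

lemma coeffMap_mulC (Q : MP L) (M : Matrix (Fin L) (Fin L) ℂ) (n : ℕ) :
    (Q * M.map Polynomial.C).map (fun p => p.coeff n)
      = Q.map (fun p => p.coeff n) * M := by
  ext i j
  simp [Matrix.mul_apply, Polynomial.finset_sum_coeff, Polynomial.coeff_mul_C]

lemma mapC_mul (M N : Matrix (Fin L) (Fin L) ℂ) :
    (M * N).map (Polynomial.C : ℂ →+* ℂ[X]) = M.map Polynomial.C * N.map Polynomial.C :=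
  Matrix.map_mul

/-- invertibility of the "leading coefficient" of `starMP (P n)`-/
lemma isUnit_A (P : ℕ → MP L) (hdet : ∀ n : ℕ, ((P n).map fun q => q.coeff n).det ≠ 0)
    (n : ℕ) : IsUnit ((starMP (P n)).map (fun p => p.coeff n)).det := by
  have h : (starMP (P n)).map (fun p => p.coeff n)
      = ((P n).map fun q => q.coeff n)ᴴ := by
    ext i j
    simp [starMP, Matrix.conjTranspose_apply, Polynomial.coeff_map]
  rw [h, Matrix.det_conjTranspose]
  simpa using hdet n

lemma cancel_lemma (P : ℕ → MP L) (hdet : ∀ n : ℕ, ((P n).map fun q => q.coeff n).det ≠ 0)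
    (n : ℕ) (X Y : Matrix (Fin L) (Fin L) ℂ)
    (h : starMP (P n) * X.map Polynomial.C = starMP (P n) * Y.map Polynomial.C) : X = Y := by
  set A := (starMP (P n)).map (fun p => p.coeff n) with hA
  have hu := isUnit_A P hdet n
  have h2 : A * X = A * Y := by
    have := congrArg (fun Z : MP L => Z.map (fun p => p.coeff n)) h
    simpa only [coeffMap_mulC] using this
  have := congrArg (fun Z => A⁻¹ * Z) h2
  simpa [← Matrix.mul_assoc, Matrix.nonsing_inv_mul A hu] using this

lemma degree_entry_mulC (Q : MP L) (M : Matrix (Fin L) (Fin L) ℂ) (n : ℕ)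
    (hQ : ∀ i j, (Q i j).degree ≤ (n : WithBot ℕ)) (i j : Fin L) :
    ((Q * M.map Polynomial.C) i j).degree ≤ (n : WithBot ℕ) := by
  rw [Matrix.mul_apply]
  refine (Polynomial.degree_sum_le _ _).trans ?_
  rw [Finset.sup_le_iff]
  intro k _
  refine (Polynomial.degree_mul_le _ _).trans ?_
  calc (Q i k).degree + ((M.map Polynomial.C) k j).degree
      ≤ (n : WithBot ℕ) + 0 := add_le_add (hQ i k) (Polynomial.degree_C_le)
    _ = (n : WithBot ℕ) := by simp

/-- every matrix polynomial with entries of degree `< N` is a right combination of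
`starMP (P n)`, `n < N`. -/
lemma decomp (P : ℕ → MP L)
    (hdeg : ∀ (n : ℕ) (i j : Fin L), ((P n) i j).degree ≤ (n : WithBot ℕ))
    (hdet : ∀ n : ℕ, ((P n).map fun q => q.coeff n).det ≠ 0) :
    ∀ (N : ℕ) (Q : MP L), (∀ i j, (Q i j).degree < (N : WithBot ℕ)) →
      ∃ M : ℕ → Matrix (Fin L) (Fin L) ℂ,
        Q = ∑ n ∈ Finset.range N, starMP (P n) * (M n).map Polynomial.C := by
  intro N
  induction N with
  | zero =>
      intro Q hQ
      refine ⟨0, ?_⟩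
      have : Q = 0 := by
        ext i j : 2
        have h0 : (Q i j).degree < 0 := by simpa using hQ i j
        have := Polynomial.degree_eq_bot.mp (Nat.WithBot.lt_zero_iff.mp h0)
        simp [this]
      simp [this]
  | succ N ih =>
      intro Q hQ
      set A := (starMP (P N)).map (fun p => p.coeff N) with hAdef
      have hu := isUnit_A P hdet N
      set B := Q.map (fun p => p.coeff N) with hBdef
      set MN := A⁻¹ * B with hMNdef
      set R := Q - starMP (P N) * MN.map Polynomial.C with hRdef
      have hdegS : ∀ i j, ((starMP (P N)) i j).degree ≤ (N : WithBot ℕ) := by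
        intro i j
        have h1 : ((starMP (P N)) i j).degree ≤ (P N j i).degree := by
          simp only [starMP, Matrix.of_apply]
          exact Polynomial.degree_map_le
        exact h1.trans (hdeg N j i)
      have hdegP : ∀ i j, ((starMP (P N) * MN.map Polynomial.C) i j).degree ≤ (N : WithBot ℕ) :=
        degree_entry_mulC _ _ _ hdegS
      have hcoeffN : (starMP (P N) * MN.map Polynomial.C).map (fun p => p.coeff N) = B := by
        rw [coeffMap_mulC, ← hAdef, hMNdef, ← Matrix.mul_assoc,
          Matrix.mul_nonsing_inv A hu, Matrix.one_mul]
      have hR : ∀ i j, (R i j).degree < (N : WithBot ℕ) := by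
        intro i j
        rw [Polynomial.degree_lt_iff_coeff_zero]
        intro m hm
        rcases eq_or_lt_of_le hm with hm' | hm'
        · -- m = N
          have hmN : m = N := by exact_mod_cast hm'.symm
          subst hmN
          have : (R.map (fun p => p.coeff m)) i j = 0 := by
            have : R.map (fun p => p.coeff m)
                = Q.map (fun p => p.coeff m) - (starMP (P m) * MN.map Polynomial.C).map (fun p => p.coeff m) := by
              ext i' j'
              simp [hRdef]
            rw [this, hcoeffN, ← hBdef]
            simp
          simpa using this
        · -- N < m
          have hmN : N < m := by exact_mod_cast hm'
          have h1 : (Q i j).coeff m = 0 := by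
            apply Polynomial.coeff_eq_zero_of_degree_lt
            exact lt_of_lt_of_le (hQ i j) (by exact_mod_cast hmN)
          have h2 : ((starMP (P N) * MN.map Polynomial.C) i j).coeff m = 0 := by
            apply Polynomial.coeff_eq_zero_of_degree_lt
            exact lt_of_le_of_lt (hdegP i j) (by exact_mod_cast hmN)
          simp [hRdef, h1, h2]
      obtain ⟨M, hM⟩ := ih R hR
      refine ⟨fun n => if n = N then MN else M n, ?_⟩
      rw [Finset.sum_range_succ]
      have hsum : ∑ n ∈ Finset.range N, starMP (P n) *
          ((fun n => if n = N then MN else M n) n).map Polynomial.C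
          = ∑ n ∈ Finset.range N, starMP (P n) * (M n).map Polynomial.C := by
        refine Finset.sum_congr rfl fun n hn => ?_
        have : n ≠ N := Nat.ne_of_lt (Finset.mem_range.mp hn)
        simp [this]
      rw [hsum, ← hM]
      simp [hRdef]

end Aux

/-- Two operators `D₁, D₂ ∈ 𝒟(W)` commute if and only if the matrices `Λₙ(D₁)` and
`Λₙ(D₂)` commute for every `n`. -/
theorem commute_iff_Lambda_commute (L : ℕ) (a b : ℝ) (hab : a < b)
    (Wt : MatrixWeight L a b) (P : ℕ → MP L) (hP : IsMOPS Wt P)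
    (D₁ D₂ : MP L → MP L) (h₁ : DWmem Wt P D₁) (h₂ : DWmem Wt P D₂)
    (Λ₁ Λ₂ : ℕ → Matrix (Fin L) (Fin L) ℂ)
    (hΛ₁ : ∀ n : ℕ, D₁ (starMP (P n)) = starMP (P n) * (Λ₁ n).map Polynomial.C)
    (hΛ₂ : ∀ n : ℕ, D₂ (starMP (P n)) = starMP (P n) * (Λ₂ n).map Polynomial.C) :
    D₁ ∘ D₂ = D₂ ∘ D₁ ↔ ∀ n : ℕ, Λ₁ n * Λ₂ n = Λ₂ n * Λ₁ n := by
  obtain ⟨hdeg, hdet, -⟩ := hP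
  constructor
  · intro h n
    have hc := congrFun h (starMP (P n))
    simp only [Function.comp_apply] at hc
    have e1 : D₁ (D₂ (starMP (P n))) = starMP (P n) * ((Λ₁ n) * (Λ₂ n)).map Polynomial.C := by
      rw [hΛ₂ n, h₁.1.map_mulC, hΛ₁ n, Matrix.mul_assoc, ← mapC_mul]
    have e2 : D₂ (D₁ (starMP (P n))) = starMP (P n) * ((Λ₂ n) * (Λ₁ n)).map Polynomial.C := by
      rw [hΛ₁ n, h₂.1.map_mulC, hΛ₂ n, Matrix.mul_assoc, ← mapC_mul]
    exact cancel_lemma P hdet n (Λ₁ n * Λ₂ n) (Λ₂ n * Λ₁ n) (by rw [← e1, ← e2]; exact hc)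
  · intro hcomm
    funext Q
    simp only [Function.comp_apply]
    set N := (Finset.univ.sup fun ij : Fin L × Fin L => (Q ij.1 ij.2).natDegree) + 1 with hN
    have hQdeg : ∀ i j, (Q i j).degree < (N : WithBot ℕ) := by
      intro i j
      refine lt_of_le_of_lt Polynomial.degree_le_natDegree ?_
      have : (Q i j).natDegree < N :=
        Nat.lt_succ_of_le (Finset.le_sup (f := fun ij : Fin L × Fin L => (Q ij.1 ij.2).natDegree) (Finset.mem_univ (i, j)))
      exact_mod_cast this
    obtain ⟨M, hM⟩ := decomp P hdeg hdet N Q hQdeg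
    rw [hM]
    have step : ∀ (D : MP L → MP L), InD D → ∀ (Λ : ℕ → Matrix (Fin L) (Fin L) ℂ),
        (∀ n, D (starMP (P n)) = starMP (P n) * (Λ n).map Polynomial.C) →
        ∀ (M : ℕ → Matrix (Fin L) (Fin L) ℂ),
        D (∑ n ∈ Finset.range N, starMP (P n) * (M n).map Polynomial.C)
          = ∑ n ∈ Finset.range N, starMP (P n) * ((Λ n) * (M n)).map Polynomial.C := by
      intro D hD Λ hΛ M
      rw [hD.map_sum]
      refine Finset.sum_congr rfl fun n _ => ?_
      rw [hD.map_mulC, hΛ n, Matrix.mul_assoc, ← mapC_mul]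
    have s2 := step D₂ h₂.1 Λ₂ hΛ₂ M
    have s1 := step D₁ h₁.1 Λ₁ hΛ₁ (fun n => Λ₂ n * M n)
    have s1' := step D₁ h₁.1 Λ₁ hΛ₁ M
    have s2' := step D₂ h₂.1 Λ₂ hΛ₂ (fun n => Λ₁ n * M n)
    beta_reduce at s1 s2'
    rw [s2, s1, s1', s2']
    refine Finset.sum_congr rfl fun n _ => ?_
    rw [← mul_assoc (Λ₁ n), hcomm n, mul_assoc]
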